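/- Let f, g : F_2^m → F_2 with f(0) = g(0) = 0, neither f, g, nor f+g linear, and suppose that for F = {f, g, f+g} the following hold: (1) for all f₁, f₂ ∈ F and all distinct h, l ∈ F_2^m, f̂₁(h) + f̂₂(l) ≠ 2^m and f̂₁(h) − f̂₂(l) ≠ 2^m; (2) for all distinct f₁, f₂ ∈ F and all h, l ∈ F_2^m, f̂₁(l+h) + f̂₂(l) − (f₁+f₂)^(h) ≠ 2^m and f̂₁(l+h) + f̂₂(h) − (f₁+f₂)^(l) ≠ 2^m. Then every nonzero codeword of C_{f,g} = {(u f(x)+ r g(x)+ v·x)_{x≠0} : u,r ∈ F_2, v ∈ F_2^m} is minimal, i.e., covers no nonzero codeword other than itself. -/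

import Mathlib

open Finset

/-- Standard inner product on `F_2^m`. -/
def ip {m : ℕ} (w x : Fin m → ZMod 2) : ZMod 2 := ∑ i, w i * x i

/-- Signed Walsh transform `ĥ(w) = Σ_x (-1)^(h(x)+w·x)`. -/
def walshS {m : ℕ} (h : (Fin m → ZMod 2) → ZMod 2) (w : Fin m → ZMod 2) : ℤ :=
  ∑ x : Fin m → ZMod 2, (-1 : ℤ) ^ ((h x + ip w x).val)

/-- The code `C_{f,g}`, indexed by the nonzero elements of `F_2^m`. -/
def codeFG {m : ℕ} (f g : (Fin m → ZMod 2) → ZMod 2) :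
    Set ({x : Fin m → ZMod 2 // x ≠ 0} → ZMod 2) :=
  {c | ∃ u r : ZMod 2, ∃ v : Fin m → ZMod 2,
    c = fun x => u * f x.1 + r * g x.1 + ip v x.1}

/-! Codewords vanish at `0` because `f` and `g` do, so supports may be compared on all of `F_2^m`.
If `supp c' ⊆ supp c` for `c = h₁ + ⟨v₁, ·⟩` and `c' = h₂ + ⟨v₂, ·⟩`, then
`wt c = wt c' + wt (c + c')`; as `ĥ(v) = 2^m - 2 wt (h + ⟨v, ·⟩)`, this says
`ĥ₂(v₂) + (h₁ + h₂)^(v₁ + v₂) - ĥ₁(v₁) = 2^m`. Walsh values of the zero function vanish off `0`,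
so according as `h₁`, `h₂` are zero, equal or distinct, this identity is ruled out by
condition (1) or (2) unless `c' = c`. -/

lemma add_self_eq_zero_of_zmod_two {M : Type*} [AddCommGroup M] [Module (ZMod 2) M] (x : M) :
    x + x = 0 := by
  rw [← two_smul (ZMod 2), show (2 : ZMod 2) = 0 from rfl, zero_smul]

lemma eq_of_add_eq_zero_of_zmod_two {M : Type*} [AddCommGroup M] [Module (ZMod 2) M] {x y : M}
    (h : x + y = 0) : x = y := by
  rw [eq_neg_of_add_eq_zero_left h, neg_eq_of_add_eq_zero_right (add_self_eq_zero_of_zmod_two y)]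

lemma mem_of_mem_span_pair_of_ne_zero {M : Type*} [AddCommGroup M] [Module (ZMod 2) M]
    {f g φ : M} (hφ : φ ∈ Submodule.span (ZMod 2) {f, g}) (hφ0 : φ ≠ 0) :
    φ ∈ ({f, g, f + g} : Set M) := by
  have zmod_two_cases : ∀ a : ZMod 2, a = 0 ∨ a = 1 := by decide
  obtain ⟨u, r, rfl⟩ := Submodule.mem_span_pair.1 hφ
  rcases zmod_two_cases u with rfl | rfl <;> rcases zmod_two_cases r with rfl | rfl <;> simp_all

lemma neg_one_pow_val_add_sub_eq_one {a b : ZMod 2} (hab : a ≠ 0 → b ≠ 0) :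
    (-1 : ℤ) ^ a.val + (-1) ^ (a + b).val - (-1) ^ b.val = 1 := by
  revert a b; decide

/-- Summed form of `wt b = wt a + wt (a + b)` for `supp a ⊆ supp b`. -/
lemma sum_neg_one_pow_val_add_sub {α : Type*} [Fintype α] {a b : α → ZMod 2}
    (hab : ∀ x, a x ≠ 0 → b x ≠ 0) :
    ∑ x, (-1 : ℤ) ^ (a x).val + ∑ x, (-1 : ℤ) ^ ((a + b) x).val - ∑ x, (-1 : ℤ) ^ (b x).val =
      Fintype.card α := by
  rw [← sum_add_distrib, ← sum_sub_distrib]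
  exact (sum_congr rfl fun x _ => neg_one_pow_val_add_sub_eq_one (hab x)).trans (by simp)

section

variable {m : ℕ}

lemma ip_zero_left : ip (0 : Fin m → ZMod 2) = 0 :=
  funext zero_dotProduct

lemma ip_add_left (v w : Fin m → ZMod 2) : ip (v + w) = ip v + ip w :=
  funext (add_dotProduct v w)

lemma ip_add_single (w x : Fin m → ZMod 2) (i : Fin m) :
    ip w (x + Pi.single i 1) = ip w x + w i :=
  (dotProduct_add w x _).trans (by rw [dotProduct_single, mul_one]; rfl)

lemma walshS_add_sub_of_support_subset {h₁ h₂ : (Fin m → ZMod 2) → ZMod 2}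
    {v₁ v₂ : Fin m → ZMod 2} (hsupp : ∀ x, (h₂ + ip v₂) x ≠ 0 → (h₁ + ip v₁) x ≠ 0) :
    walshS h₂ v₂ + walshS (h₁ + h₂) (v₁ + v₂) - walshS h₁ v₁ = 2 ^ m := by
  have hadd : h₂ + ip v₂ + (h₁ + ip v₁) = h₁ + h₂ + ip (v₁ + v₂) := by
    rw [ip_add_left]; abel
  have := sum_neg_one_pow_val_add_sub hsupp
  rw [hadd] at this
  simpa [walshS, Fintype.card_fun, ZMod.card] using this

lemma walshS_zero_left {w : Fin m → ZMod 2} (hw : w ≠ 0) : walshS 0 w = 0 := by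
  obtain ⟨i, hi⟩ : ∃ i, w i ≠ 0 := Function.ne_iff.1 hw
  have hflip (a : ZMod 2) : (-1 : ℤ) ^ (a + w i).val = -(-1) ^ a.val := by
    generalize w i = b at hi; revert a b; decide
  -- translating by the `i`-th unit vector flips every sign
  have hneg : walshS 0 w = -walshS 0 w := by
    conv_lhs => rw [walshS, ← Equiv.sum_comp (Equiv.addRight (Pi.single i 1))]
    rw [walshS, ← sum_neg_distrib]
    simp only [Equiv.coe_addRight, Pi.zero_apply, zero_add, ip_add_single, hflip]
  linarith

theorem eq_of_support_subset (S : Submodule (ZMod 2) ((Fin m → ZMod 2) → ZMod 2))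
    (hsum : ∀ φ ∈ S, φ ≠ 0 → ∀ h l, h ≠ l → walshS φ h + walshS φ l ≠ 2 ^ m)
    (hsub : ∀ φ ∈ S, φ ≠ 0 → ∀ h l, h ≠ l → walshS φ h - walshS φ l ≠ 2 ^ m)
    (hmix : ∀ φ ∈ S, φ ≠ 0 → ∀ ψ ∈ S, ψ ≠ 0 → φ ≠ ψ → ∀ h l,
      walshS φ (l + h) + walshS ψ l - walshS (φ + ψ) h ≠ 2 ^ m)
    {h₁ h₂ : (Fin m → ZMod 2) → ZMod 2} (hh₁ : h₁ ∈ S) (hh₂ : h₂ ∈ S)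
    {v₁ v₂ : Fin m → ZMod 2} (hc₁ : h₁ + ip v₁ ≠ 0) (hc₂ : h₂ + ip v₂ ≠ 0)
    (hsupp : ∀ x, (h₂ + ip v₂) x ≠ 0 → (h₁ + ip v₁) x ≠ 0) :
    h₂ + ip v₂ = h₁ + ip v₁ := by
  by_contra hne
  have key := walshS_add_sub_of_support_subset hsupp
  have hv_add : h₁ = h₂ → v₁ + v₂ ≠ 0 := by
    rintro rfl h; exact hne (by rw [eq_of_add_eq_zero_of_zmod_two h])
  rcases eq_or_ne h₁ 0 with rfl | h₁0 <;> rcases eq_or_ne h₂ 0 with rfl | h₂0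
  · have hv₁ : v₁ ≠ 0 := by rintro rfl; simp [ip_zero_left] at hc₁
    have hv₂ : v₂ ≠ 0 := by rintro rfl; simp [ip_zero_left] at hc₂
    rw [add_zero, walshS_zero_left hv₁, walshS_zero_left hv₂, walshS_zero_left (hv_add rfl)] at key
    exact pow_ne_zero m two_ne_zero (by simpa using key.symm)
  · have hv₁ : v₁ ≠ 0 := by rintro rfl; simp [ip_zero_left] at hc₁
    refine hsum h₂ hh₂ h₂0 v₂ (v₁ + v₂) (by simpa using hv₁) ?_
    simpa [walshS_zero_left hv₁] using key
  · have hv₂ : v₂ ≠ 0 := by rintro rfl; simp [ip_zero_left] at hc₂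
    refine hsub h₁ hh₁ h₁0 (v₁ + v₂) v₁ (by simpa using hv₂) ?_
    simpa [walshS_zero_left hv₂] using key
  rcases eq_or_ne h₁ h₂ with rfl | h₁₂
  · refine hsub h₁ hh₁ h₁0 v₂ v₁ (fun h => hv_add rfl (by rw [h, add_self_eq_zero_of_zmod_two])) ?_
    simpa [add_self_eq_zero_of_zmod_two, walshS_zero_left (hv_add rfl)] using key
  · refine hmix h₂ hh₂ h₂0 (h₁ + h₂) (S.add_mem hh₁ hh₂) ?_ ?_ v₁ (v₁ + v₂) ?_
    · exact fun h => h₁₂ (eq_of_add_eq_zero_of_zmod_two h)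
    · simpa using h₁0
    · rwa [add_right_comm, add_self_eq_zero_of_zmod_two, zero_add, add_left_comm,
        add_self_eq_zero_of_zmod_two, add_zero]

end

theorem stmt_18_general (m : ℕ) (f g : (Fin m → ZMod 2) → ZMod 2)
    (hf0 : f 0 = 0) (hg0 : g 0 = 0)
    (hcond1 : ∀ f₁ ∈ ({f, g, f + g} : Set ((Fin m → ZMod 2) → ZMod 2)),
      ∀ f₂ ∈ ({f, g, f + g} : Set ((Fin m → ZMod 2) → ZMod 2)),
      ∀ h l : Fin m → ZMod 2, h ≠ l →
        walshS f₁ h + walshS f₂ l ≠ 2 ^ m ∧ walshS f₁ h - walshS f₂ l ≠ 2 ^ m)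
    (hcond2 : ∀ f₁ ∈ ({f, g, f + g} : Set ((Fin m → ZMod 2) → ZMod 2)),
      ∀ f₂ ∈ ({f, g, f + g} : Set ((Fin m → ZMod 2) → ZMod 2)), f₁ ≠ f₂ →
      ∀ h l : Fin m → ZMod 2,
        walshS f₁ (l + h) + walshS f₂ l - walshS (f₁ + f₂) h ≠ 2 ^ m ∧
        walshS f₁ (l + h) + walshS f₂ h - walshS (f₁ + f₂) l ≠ 2 ^ m) :
    ∀ c ∈ codeFG f g, c ≠ 0 → ∀ c' ∈ codeFG f g, c' ≠ 0 →
      (∀ x, c' x ≠ 0 → c x ≠ 0) → c' = c := by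
  set S := Submodule.span (ZMod 2) {f, g}
  have hF {φ} (hφ : φ ∈ S) (hφ0 : φ ≠ 0) := mem_of_mem_span_pair_of_ne_zero hφ hφ0
  rintro _ ⟨u₁, r₁, v₁, rfl⟩ hc₁ _ ⟨u₂, r₂, v₂, rfl⟩ hc₂ hsupp
  have hS (u r : ZMod 2) : u • f + r • g ∈ S := Submodule.mem_span_pair.2 ⟨u, r, rfl⟩
  have hsupp' : ∀ x, (u₂ • f + r₂ • g + ip v₂) x ≠ 0 → (u₁ • f + r₁ • g + ip v₁) x ≠ 0 := by
    intro x hx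
    obtain rfl | hx0 := eq_or_ne x 0
    · simp [hf0, hg0, ip] at hx
    · exact hsupp ⟨x, hx0⟩ hx
  have heq := eq_of_support_subset S
    (fun φ hφ hφ0 h l hhl => (hcond1 φ (hF hφ hφ0) φ (hF hφ hφ0) h l hhl).1)
    (fun φ hφ hφ0 h l hhl => (hcond1 φ (hF hφ hφ0) φ (hF hφ hφ0) h l hhl).2)
    (fun φ hφ hφ0 ψ hψ hψ0 hφψ h l => (hcond2 φ (hF hφ hφ0) ψ (hF hψ hψ0) hφψ h l).1)
    (hS u₁ r₁) (hS u₂ r₂) (fun h => hc₁ (funext fun x => congrFun h x.1))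
    (fun h => hc₂ (funext fun x => congrFun h x.1)) hsupp'
  exact funext fun x => congrFun heq x.1

theorem stmt_18 (m : ℕ) (f g : (Fin m → ZMod 2) → ZMod 2)
    (hf0 : f 0 = 0) (hg0 : g 0 = 0)
    (hf : ∀ a : Fin m → ZMod 2, f ≠ fun x => ip a x)
    (hg : ∀ b : Fin m → ZMod 2, g ≠ fun x => ip b x)
    (hfg : ∀ e : Fin m → ZMod 2, (f + g) ≠ fun x => ip e x)
    (hcond1 : ∀ f₁ ∈ ({f, g, f + g} : Set ((Fin m → ZMod 2) → ZMod 2)),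
      ∀ f₂ ∈ ({f, g, f + g} : Set ((Fin m → ZMod 2) → ZMod 2)),
      ∀ h l : Fin m → ZMod 2, h ≠ l →
        walshS f₁ h + walshS f₂ l ≠ 2 ^ m ∧ walshS f₁ h - walshS f₂ l ≠ 2 ^ m)
    (hcond2 : ∀ f₁ ∈ ({f, g, f + g} : Set ((Fin m → ZMod 2) → ZMod 2)),
      ∀ f₂ ∈ ({f, g, f + g} : Set ((Fin m → ZMod 2) → ZMod 2)), f₁ ≠ f₂ →
      ∀ h l : Fin m → ZMod 2,
        walshS f₁ (l + h) + walshS f₂ l - walshS (f₁ + f₂) h ≠ 2 ^ m ∧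
        walshS f₁ (l + h) + walshS f₂ h - walshS (f₁ + f₂) l ≠ 2 ^ m) :
    ∀ c ∈ codeFG f g, c ≠ 0 → ∀ c' ∈ codeFG f g, c' ≠ 0 →
      (∀ x, c' x ≠ 0 → c x ≠ 0) → c' = c :=
  stmt_18_general m f g hf0 hg0 hcond1 hcond2
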